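/- The function c ↦ ‖π_T(c)‖₁ is twice differentiable on [0,1) with second derivative d²/dc² ‖π_T(c)‖₁ = −2α·u(I−cT)^{−3}T(I−T)1 ≤ 0, so ‖π_T(c)‖₁ is concave on [0,1); if moreover uT(I−T)1 > 0, then the second derivative is strictly negative on [0,1). -/

import Mathlib

open Matrix Set

section aux

attribute [local instance] Matrix.linftyOpNormedRing Matrix.linftyOpNormedAlgebra

variable {n : ℕ}

noncomputable def Lcl (u v : Fin n → ℝ) : Matrix (Fin n) (Fin n) ℝ →L[ℝ] ℝ :=
  LinearMap.toContinuousLinearMap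
    { toFun := fun A => u ⬝ᵥ (A *ᵥ v)
      map_add' := fun A B => by simp [Matrix.add_mulVec, dotProduct_add]
      map_smul' := fun r A => by simp [Matrix.smul_mulVec] }

noncomputable def Ecl (i j : Fin n) : Matrix (Fin n) (Fin n) ℝ →L[ℝ] ℝ :=
  LinearMap.toContinuousLinearMap
    { toFun := fun A => A i j
      map_add' := fun A B => rfl
      map_smul' := fun r A => rfl }

lemma normT_le_one (T : Matrix (Fin n) (Fin n) ℝ)
    (hT0 : ∀ i j, 0 ≤ T i j) (hT1 : ∀ i, ∑ j, T i j ≤ 1) : ‖T‖ ≤ 1 := by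
  rw [Matrix.linfty_opNorm_def]
  rw [show (1:ℝ) = ((1:NNReal):ℝ) by simp, NNReal.coe_le_coe]
  refine Finset.sup_le fun i _ => ?_
  rw [← NNReal.coe_le_coe, NNReal.coe_sum, NNReal.coe_one]
  calc ∑ j, (‖T i j‖₊ : ℝ) = ∑ j, T i j := by
        refine Finset.sum_congr rfl fun j _ => ?_
        rw [coe_nnnorm, Real.norm_of_nonneg (hT0 i j)]
    _ ≤ 1 := hT1 i

lemma norm_smulT_lt (T : Matrix (Fin n) (Fin n) ℝ)
    (hT0 : ∀ i j, 0 ≤ T i j) (hT1 : ∀ i, ∑ j, T i j ≤ 1) {c : ℝ} (hc : |c| < 1) :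
    ‖c • T‖ < 1 := by
  rw [norm_smul, Real.norm_eq_abs]
  calc |c| * ‖T‖ ≤ |c| * 1 :=
        mul_le_mul_of_nonneg_left (normT_le_one T hT0 hT1) (abs_nonneg c)
    _ = |c| := mul_one _
    _ < 1 := hc

lemma isUnit_aux (T : Matrix (Fin n) (Fin n) ℝ)
    (hT0 : ∀ i j, 0 ≤ T i j) (hT1 : ∀ i, ∑ j, T i j ≤ 1) {c : ℝ} (hc : |c| < 1) :
    IsUnit (1 - c • T) :=
  isUnit_one_sub_of_norm_lt_one (norm_smulT_lt T hT0 hT1 hc)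

lemma pow_entry_nonneg {M : Matrix (Fin n) (Fin n) ℝ} (h : ∀ i j, 0 ≤ M i j) :
    ∀ k i j, 0 ≤ (M ^ k) i j := by
  intro k
  induction k with
  | zero =>
      intro i j
      rw [pow_zero]
      by_cases hij : i = j <;> simp [Matrix.one_apply, hij]
  | succ k ih =>
      intro i j
      rw [pow_succ, Matrix.mul_apply]
      exact Finset.sum_nonneg fun l _ => mul_nonneg (ih i l) (h l j)

lemma one_le_inv_entry (T : Matrix (Fin n) (Fin n) ℝ)
    (hT0 : ∀ i j, 0 ≤ T i j) (hT1 : ∀ i, ∑ j, T i j ≤ 1) {c : ℝ}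
    (hc : c ∈ Set.Ico (0:ℝ) 1) (i j : Fin n) :
    (1 : Matrix (Fin n) (Fin n) ℝ) i j ≤ (1 - c • T)⁻¹ i j := by
  have habs : |c| < 1 := by rw [abs_of_nonneg hc.1]; exact hc.2
  have hn : ‖c • T‖ < 1 := norm_smulT_lt T hT0 hT1 habs
  have hsum : Summable (fun k : ℕ => (c • T) ^ k) := summable_geometric_of_norm_lt_one hn
  have hginv : (1 - c • T)⁻¹ = ∑' k : ℕ, (c • T) ^ k := by
    rw [Matrix.nonsing_inv_eq_ringInverse, ← geom_series_eq_inverse _ hn]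
    rfl
  have hH : HasSum (fun k : ℕ => ((c • T) ^ k) i j) ((1 - c • T)⁻¹ i j) := by
    rw [hginv]
    exact hsum.hasSum.mapL (Ecl i j)
  have hnn : ∀ i' j', 0 ≤ (c • T) i' j' := fun i' j' =>
    mul_nonneg hc.1 (hT0 i' j')
  have h0 : ((c • T) ^ 0) i j = (1 : Matrix (Fin n) (Fin n) ℝ) i j := by rw [pow_zero]
  calc (1 : Matrix (Fin n) (Fin n) ℝ) i j = ((c • T) ^ 0) i j := h0.symm
    _ ≤ (1 - c • T)⁻¹ i j := le_hasSum hH 0 fun k _ => pow_entry_nonneg hnn k i j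

lemma hasDerivAt_inv_matrix (T : Matrix (Fin n) (Fin n) ℝ)
    (hT0 : ∀ i j, 0 ≤ T i j) (hT1 : ∀ i, ∑ j, T i j ≤ 1) {c : ℝ} (hc : |c| < 1) :
    HasDerivAt (fun x : ℝ => (1 - x • T)⁻¹)
      ((1 - c • T)⁻¹ * T * (1 - c • T)⁻¹) c := by
  have hu := isUnit_aux T hT0 hT1 hc
  have haff : HasDerivAt (fun x : ℝ => 1 - x • T) (-T) c := by
    have h := ((hasDerivAt_id c).smul_const T).const_sub (1 : Matrix (Fin n) (Fin n) ℝ)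
    simp at h
    exact h
  have hinv := hasFDerivAt_ringInverse (𝕜 := ℝ) hu.unit
  rw [hu.unit_spec] at hinv
  have hcomp := hinv.comp_hasDerivAt c haff
  have hfun : (fun x : ℝ => (1 - x • T)⁻¹) = fun x : ℝ =>
      Ring.inverse (1 - x • T) := funext fun x => Matrix.nonsing_inv_eq_ringInverse _
  rw [hfun]
  refine hcomp.congr_deriv ?_
  have hco : (↑hu.unit⁻¹ : Matrix (Fin n) (Fin n) ℝ) = (1 - c • T)⁻¹ := by
    rw [Matrix.coe_units_inv, hu.unit_spec]
  rw [ContinuousLinearMap.neg_apply, ContinuousLinearMap.mulLeftRight_apply, hco]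
  simp [mul_assoc]

lemma hasDerivAt_dot1 (T : Matrix (Fin n) (Fin n) ℝ)
    (hT0 : ∀ i j, 0 ≤ T i j) (hT1 : ∀ i, ∑ j, T i j ≤ 1)
    (u v : Fin n → ℝ) {c : ℝ} (hc : |c| < 1) :
    HasDerivAt (fun x : ℝ => u ⬝ᵥ ((1 - x • T)⁻¹ *ᵥ v))
      (u ⬝ᵥ (((1 - c • T)⁻¹ * T * (1 - c • T)⁻¹) *ᵥ v)) c :=
  (Lcl u v).hasFDerivAt.comp_hasDerivAt c (hasDerivAt_inv_matrix T hT0 hT1 hc)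

lemma hasDerivAt_dot2 (T : Matrix (Fin n) (Fin n) ℝ)
    (hT0 : ∀ i j, 0 ≤ T i j) (hT1 : ∀ i, ∑ j, T i j ≤ 1)
    (u v : Fin n → ℝ) {c : ℝ} (hc : |c| < 1) :
    HasDerivAt (fun x : ℝ => u ⬝ᵥ (((1 - x • T)⁻¹ * T * (1 - x • T)⁻¹) *ᵥ v))
      (u ⬝ᵥ (((1 - c • T)⁻¹ * T * (1 - c • T)⁻¹ * T * (1 - c • T)⁻¹
        + (1 - c • T)⁻¹ * T * ((1 - c • T)⁻¹ * T * (1 - c • T)⁻¹)) *ᵥ v)) c := by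
  have hF := hasDerivAt_inv_matrix T hT0 hT1 hc
  have hm := (hF.mul_const T).mul hF
  exact (Lcl u v).hasFDerivAt.comp_hasDerivAt c hm

end aux

lemma keyIdentity (n : ℕ) (T : Matrix (Fin n) (Fin n) ℝ) (c : ℝ)
    (hu : IsUnit (1 - c • T)) :
    (1 - c) • ((1 - c • T)⁻¹ * T * (1 - c • T)⁻¹ * T * (1 - c • T)⁻¹
        + (1 - c • T)⁻¹ * T * ((1 - c • T)⁻¹ * T * (1 - c • T)⁻¹))
      - (2:ℝ) • ((1 - c • T)⁻¹ * T * (1 - c • T)⁻¹)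
    = -((2:ℝ) • ((1 - c • T)⁻¹ ^ 3 * T * (1 - T))) := by
  set A := 1 - c • T with hA
  set G := A⁻¹ with hG
  have hdet : IsUnit A.det := (Matrix.isUnit_iff_isUnit_det _).mp hu
  have hGA : G * A = 1 := Matrix.nonsing_inv_mul _ hdet
  have hAG : A * G = 1 := Matrix.mul_nonsing_inv _ hdet
  have hTA : T * A = A * T := by
    rw [hA, mul_sub, sub_mul, mul_one, one_mul, mul_smul_comm, smul_mul_assoc]
  have hcomm : T * G = G * T := by
    calc T * G = 1 * (T * G) := (one_mul _).symm
      _ = G * (A * (T * G)) := by rw [← hGA, mul_assoc]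
      _ = G * ((A * T) * G) := by rw [← mul_assoc A T G]
      _ = G * ((T * A) * G) := by rw [hTA]
      _ = G * (T * (A * G)) := by rw [mul_assoc]
      _ = G * T := by rw [hAG, mul_one]
  have hcomm2 : ∀ X : Matrix (Fin n) (Fin n) ℝ, T * (G * X) = G * (T * X) := fun X => by
    rw [← mul_assoc, hcomm, mul_assoc]
  have h3 : G ^ 3 = G * (G * G) := by rw [pow_succ, pow_two, mul_assoc]
  have hins0 : G * (A * T) = T := by rw [← mul_assoc, hGA, one_mul]
  have hins : G * (G * T) = G * (G * (G * (A * T))) := by rw [hins0]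
  have hAT : A * T = T - c • (T * T) := by rw [hA, sub_mul, one_mul, smul_mul_assoc]
  rw [h3]
  simp only [mul_assoc]
  simp only [hcomm2, hcomm]
  rw [hins, hAT]
  simp only [mul_sub, mul_one, mul_smul_comm, smul_sub, smul_smul, smul_add, sub_smul, neg_sub]
  module

/-- The PageRank mass `‖π_T(c)‖₁ = α(1-c)·u(I-cT)⁻¹1` is twice differentiable on `[0,1)` with
second derivative `-2α·u(I-cT)⁻³T(I-T)1 ≤ 0`, hence it is concave on `[0,1)`; if moreover
`uT(I-T)1 > 0`, the second derivative is strictly negative on `[0,1)`. -/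
theorem pagerank_mass_second_deriv (n : ℕ) (hn : 0 < n) (T : Matrix (Fin n) (Fin n) ℝ)
    (hT0 : ∀ i j, 0 ≤ T i j) (hT1 : ∀ i, ∑ j, T i j ≤ 1)
    (u : Fin n → ℝ) (hu : u = fun _ => (1 : ℝ) / n)
    (one : Fin n → ℝ) (hone : one = fun _ => (1 : ℝ))
    (α : ℝ) (hα : 0 < α)
    (mass : ℝ → ℝ)
    (hmass : ∀ c : ℝ, mass c = α * (1 - c) * (u ⬝ᵥ ((1 - c • T)⁻¹ *ᵥ one)))
    (S : ℝ → ℝ)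
    (hS : ∀ c : ℝ,
      S c = -(2 * α * (u ⬝ᵥ (((1 - c • T)⁻¹ ^ 3) *ᵥ (T *ᵥ ((1 - T) *ᵥ one)))))) :
    (∀ c ∈ Set.Ico (0 : ℝ) 1,
        DifferentiableAt ℝ mass c ∧ HasDerivAt (deriv mass) (S c) c ∧ S c ≤ 0) ∧
      ConcaveOn ℝ (Set.Ico (0 : ℝ) 1) mass ∧
      (0 < u ⬝ᵥ (T *ᵥ ((1 - T) *ᵥ one)) → ∀ c ∈ Set.Ico (0 : ℝ) 1, S c < 0) := by
  have habs : ∀ {c : ℝ}, c ∈ Set.Ico (0:ℝ) 1 → |c| < 1 := fun {c} hc => by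
    rw [abs_of_nonneg hc.1]; exact hc.2
  -- first derivative
  set D : ℝ → ℝ := fun x => α * (-1 * (u ⬝ᵥ ((1 - x • T)⁻¹ *ᵥ one))
    + (1 - x) * (u ⬝ᵥ (((1 - x • T)⁻¹ * T * (1 - x • T)⁻¹) *ᵥ one))) with hDdef
  have hmassD : ∀ c : ℝ, |c| < 1 → HasDerivAt mass (D c) c := by
    intro c hc
    have hfun : mass = fun x => α * ((1 - x) * (u ⬝ᵥ ((1 - x • T)⁻¹ *ᵥ one))) :=
      funext fun x => by rw [hmass x, mul_assoc]
    rw [hfun]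
    have h := (((hasDerivAt_id' (x := c)).const_sub (1:ℝ)).mul
      (hasDerivAt_dot1 T hT0 hT1 u one hc)).const_mul α
    exact h
  -- second derivative
  have hDder : ∀ c : ℝ, |c| < 1 → HasDerivAt D (S c) c := by
    intro c hc
    have hC1 := hasDerivAt_dot1 T hT0 hT1 u one hc
    have hC2 := hasDerivAt_dot2 T hT0 hT1 u one hc
    have h := ((hC1.const_mul (-1:ℝ)).add
      (((hasDerivAt_id' (x := c)).const_sub (1:ℝ)).mul hC2)).const_mul α
    have hkey := keyIdentity n T c (isUnit_aux T hT0 hT1 hc)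
    have hk2 := congrArg (fun A : Matrix (Fin n) (Fin n) ℝ => u ⬝ᵥ (A *ᵥ one)) hkey
    simp only [Matrix.sub_mulVec, Matrix.add_mulVec, Matrix.smul_mulVec,
      Matrix.neg_mulVec, dotProduct_sub, dotProduct_add, dotProduct_smul, dotProduct_neg,
      smul_eq_mul] at hk2
    refine h.congr_deriv (Eq.symm ?_)
    rw [hS c]
    simp only [Matrix.mulVec_mulVec, Matrix.add_mulVec, dotProduct_add]
    rw [show (1 - c • T)⁻¹ ^ 3 * (T * (1 - T)) = (1 - c • T)⁻¹ ^ 3 * T * (1 - T) from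
      (mul_assoc _ _ _).symm]
    linear_combination (-α) * hk2
  have hDeriv2 : ∀ c ∈ Set.Ico (0:ℝ) 1, HasDerivAt (deriv mass) (S c) c := by
    intro c hc
    have hmem : Set.Ioo (-1:ℝ) 1 ∈ nhds c :=
      Ioo_mem_nhds (by linarith [hc.1]) hc.2
    have hEv : deriv mass =ᶠ[nhds c] D := by
      filter_upwards [hmem] with x hx
      exact (hmassD x (abs_lt.mpr ⟨hx.1, hx.2⟩)).deriv
    exact (hDder c (habs hc)).congr_of_eventuallyEq hEv
  -- sign analysis
  have hdotle : ∀ a b : Fin n → ℝ, (∀ i, a i ≤ b i) → u ⬝ᵥ a ≤ u ⬝ᵥ b := by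
    intro a b hab
    simp only [hu, dotProduct]
    exact Finset.sum_le_sum fun i _ => mul_le_mul_of_nonneg_left (hab i) (by positivity)
  have hdotnn : ∀ a : Fin n → ℝ, (∀ i, 0 ≤ a i) → 0 ≤ u ⬝ᵥ a := by
    intro a ha
    simp only [hu, dotProduct]
    exact Finset.sum_nonneg fun i _ => mul_nonneg (by positivity) (ha i)
  have hv1 : ∀ j, 0 ≤ ((1 - T) *ᵥ one) j := by
    intro j
    have hcal : ((1 - T) *ᵥ one) j = 1 - ∑ k, T j k := by
      simp [Matrix.sub_mulVec, Matrix.one_mulVec, Matrix.mulVec, dotProduct, hone,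
        Matrix.one_apply, Finset.sum_ite_eq, Finset.sum_ite_eq']
    rw [hcal]
    exact sub_nonneg.mpr (hT1 j)
  have hw : ∀ i, 0 ≤ (T *ᵥ ((1 - T) *ᵥ one)) i := by
    intro i
    simp only [Matrix.mulVec, dotProduct]
    exact Finset.sum_nonneg fun j _ => mul_nonneg (hT0 i j) (hv1 j)
  have hstep : ∀ c ∈ Set.Ico (0:ℝ) 1, ∀ x : Fin n → ℝ, (∀ i, 0 ≤ x i) →
      (∀ i, x i ≤ ((1 - c • T)⁻¹ *ᵥ x) i) ∧ (∀ i, 0 ≤ ((1 - c • T)⁻¹ *ᵥ x) i) := by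
    intro c hc x hx
    have hGe := fun i j => one_le_inv_entry T hT0 hT1 hc i j
    have h1 : ∀ i, x i ≤ ((1 - c • T)⁻¹ *ᵥ x) i := by
      intro i
      have hxi : x i = ((1 : Matrix (Fin n) (Fin n) ℝ) *ᵥ x) i := by
        rw [Matrix.one_mulVec]
      rw [hxi]
      simp only [Matrix.mulVec, dotProduct]
      exact Finset.sum_le_sum fun j _ => mul_le_mul_of_nonneg_right (hGe i j) (hx j)
    exact ⟨h1, fun i => le_trans (hx i) (h1 i)⟩
  have hcube : ∀ c ∈ Set.Ico (0:ℝ) 1, ∀ x : Fin n → ℝ, (∀ i, 0 ≤ x i) →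
      (∀ i, x i ≤ (((1 - c • T)⁻¹ ^ 3) *ᵥ x) i) ∧
        (∀ i, 0 ≤ (((1 - c • T)⁻¹ ^ 3) *ᵥ x) i) := by
    intro c hc x hx
    obtain ⟨h1, h1n⟩ := hstep c hc x hx
    obtain ⟨h2, h2n⟩ := hstep c hc _ h1n
    obtain ⟨h3, h3n⟩ := hstep c hc _ h2n
    have hsplit : ((1 - c • T)⁻¹ ^ 3) *ᵥ x
        = (1 - c • T)⁻¹ *ᵥ ((1 - c • T)⁻¹ *ᵥ ((1 - c • T)⁻¹ *ᵥ x)) := by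
      rw [Matrix.mulVec_mulVec, Matrix.mulVec_mulVec, pow_succ, pow_succ, pow_one]
    constructor
    · intro i; rw [hsplit]
      exact le_trans (h1 i) (le_trans (h2 i) (h3 i))
    · intro i; rw [hsplit]; exact h3n i
  have hXnn : ∀ c ∈ Set.Ico (0:ℝ) 1,
      0 ≤ u ⬝ᵥ (((1 - c • T)⁻¹ ^ 3) *ᵥ (T *ᵥ ((1 - T) *ᵥ one))) := fun c hc =>
    hdotnn _ (hcube c hc _ hw).2
  have hXge : ∀ c ∈ Set.Ico (0:ℝ) 1,
      u ⬝ᵥ (T *ᵥ ((1 - T) *ᵥ one))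
        ≤ u ⬝ᵥ (((1 - c • T)⁻¹ ^ 3) *ᵥ (T *ᵥ ((1 - T) *ᵥ one))) := fun c hc =>
    hdotle _ _ (hcube c hc _ hw).1
  have hSle : ∀ c ∈ Set.Ico (0:ℝ) 1, S c ≤ 0 := by
    intro c hc
    rw [hS c]
    have := hXnn c hc
    nlinarith
  refine ⟨fun c hc => ⟨(hmassD c (habs hc)).differentiableAt, hDeriv2 c hc, hSle c hc⟩,
    ?_, ?_⟩
  · -- concavity
    apply concaveOn_of_deriv2_nonpos (convex_Ico 0 1)
    · exact fun x hx =>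
        (hmassD x (habs hx)).differentiableAt.continuousAt.continuousWithinAt
    · rw [interior_Ico]
      exact fun x hx =>
        (hmassD x (habs ⟨hx.1.le, hx.2⟩)).differentiableAt.differentiableWithinAt
    · rw [interior_Ico]
      exact fun x hx =>
        (hDeriv2 x ⟨hx.1.le, hx.2⟩).differentiableAt.differentiableWithinAt
    · intro x hx
      rw [interior_Ico] at hx
      have h2 := hDeriv2 x ⟨hx.1.le, hx.2⟩
      have hit : deriv^[2] mass = deriv (deriv mass) := rfl
      rw [hit, h2.deriv]
      exact hSle x ⟨hx.1.le, hx.2⟩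
  · -- strict negativity
    intro hpos c hc
    rw [hS c]
    have := lt_of_lt_of_le hpos (hXge c hc)
    nlinarith
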